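/- Let (S, <) be a well-founded partial order, S' = S ∪ {⊥} with ⊥ a fresh least element, and g ≥ 1. If s is a tree labeled over S' (no underlined, no marked symbols) and s ↪_{g+1}* · →_lengthen u, then there exists a tree v labeled over S' with s ▷* v ↪_g* u, where ▷ is the Star relation over S'. -/

import Mathlib

namespace StarGames

/-- Unranked terms over signature `σ` and variables `X`. -/
inductive Term (σ : Type) (X : Type) : Type
  | var : X → Term σ X
  | app : σ → List (Term σ X) → Term σ X

variable {σ σ' X : Type}

/-- Relabeling of symbols. -/
def Term.relabel (h : σ → σ') : Term σ X → Term σ' X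
  | .var x => .var x
  | .app f ts => .app (h f) (ts.attach.map fun ⟨t, _⟩ => t.relabel h)
decreasing_by
  have := List.sizeOf_lt_of_mem ‹_ ∈ ts›
  simp only [Term.app.sizeOf_spec]
  omega

/-- Closure of a root-step relation under contexts (rewriting inside one argument). -/
inductive Rewrite (R : Term σ X → Term σ X → Prop) : Term σ X → Term σ X → Prop
  | root {s t : Term σ X} : R s t → Rewrite R s t
  | congr {s t : Term σ X} (f : σ) (pre post : List (Term σ X)) :
      Rewrite R s t →
      Rewrite R (Term.app f (pre ++ s :: post)) (Term.app f (pre ++ t :: post))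

/-- Root steps of the swap TRS:  f(u⃗,x,y,w⃗) → f(u⃗,y,x,w⃗). -/
inductive SwapRoot : Term σ X → Term σ X → Prop
  | swap (f : σ) (us : List (Term σ X)) (x y : Term σ X) (ws : List (Term σ X)) :
      SwapRoot (Term.app f (us ++ x :: y :: ws)) (Term.app f (us ++ y :: x :: ws))

/-- One swap step, anywhere in a term. -/
def SwapStep : Term σ X → Term σ X → Prop := Rewrite (SwapRoot (σ := σ) (X := X))

/-- `≃` : the equivalence relation generated by swap steps. -/
def TermEquiv : Term σ X → Term σ X → Prop := Relation.EqvGen SwapStep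

def treeSetoid (σ X : Type) : Setoid (Term σ X) :=
  ⟨TermEquiv, Relation.EqvGen.is_equivalence _⟩

/-- (Unordered) trees: terms modulo permutation of arguments. -/
def Tree (σ X : Type) := Quotient (treeSetoid σ X)

def Tree.mk (t : Term σ X) : Tree σ X := Quotient.mk (treeSetoid σ X) t

/-- Rewrite relation induced on trees by a root-step relation. -/
def TreeRel (R : Term σ X → Term σ X → Prop) : Tree σ X → Tree σ X → Prop :=
  fun a b => ∃ s t : Term σ X, a = Tree.mk s ∧ b = Tree.mk t ∧ Rewrite R s t

/-- Terms all of whose symbols satisfy `p`. -/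
inductive Uses (p : σ → Prop) : Term σ X → Prop
  | var (x : X) : Uses p (Term.var x)
  | app (f : σ) (ts : List (Term σ X)) :
      p f → (∀ t ∈ ts, Uses p t) → Uses p (Term.app f ts)

end StarGames

namespace StarGames

/-- Markings for the Star Hydra setting: plain symbols `s`, underlined symbols
`s̲`, and starred symbols `s⋆`. -/
inductive Mark3 : Type
  | plain : Mark3
  | ul : Mark3
  | star : Mark3

variable {S : Type}

/-- The label set `S' = S ∪ {⊥}`: `some a` is `a ∈ S`, `none` is the fresh
element `⊥` below all elements of `S`. -/
abbrev SBot (S : Type) : Type := Option S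

/-- The well-founded order on `S' = S ∪ {⊥}` extending `<` by `⊥` below all
elements of `S`. -/
def ltBot (lt : S → S → Prop) : SBot S → SBot S → Prop
  | none, some _ => True
  | some a, some b => lt a b
  | _, _ => False

/-- The Star Hydra signature: symbols of `S'`, possibly underlined or starred. -/
abbrev HSig (S : Type) : Type := SBot S × Mark3

/-- Root steps of the TRS `Star` over `S'` (with its marked copies). -/
inductive StarHRoot (lt : S → S → Prop) : Term (HSig S) Empty → Term (HSig S) Empty → Prop
  | put (f : SBot S) (ts : List (Term (HSig S) Empty)) :
      StarHRoot lt (.app (f, Mark3.plain) ts) (.app (f, Mark3.star) ts)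
  | select (f : SBot S) (xs : List (Term (HSig S) Empty)) (y : Term (HSig S) Empty)
      (zs : List (Term (HSig S) Empty)) :
      StarHRoot lt (.app (f, Mark3.star) (xs ++ y :: zs)) y
  | copy (f g : SBot S) (k : ℕ) (ts : List (Term (HSig S) Empty)) :
      ltBot lt g f →
      StarHRoot lt (.app (f, Mark3.star) ts)
        (.app (g, Mark3.plain) (List.replicate k (Term.app (f, Mark3.star) ts)))
  | down (f g : SBot S) (k : ℕ) (xs ys zs : List (Term (HSig S) Empty)) :
      StarHRoot lt (.app (f, Mark3.star) (xs ++ Term.app (g, Mark3.plain) ys :: zs))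
        (.app (f, Mark3.plain)
          (xs ++ List.replicate k (Term.app (g, Mark3.star) ys) ++ zs))

/-- Root steps of the garbage-collection relation `↪_g`:
`n(x⃗, y₁, …, y_h) ↪_g n̲(x⃗)` for every `h ≥ g`. -/
inductive GRoot (g : ℕ) : Term (HSig S) Empty → Term (HSig S) Empty → Prop
  | gc (n : SBot S) (xs ys : List (Term (HSig S) Empty)) :
      g ≤ ys.length →
      GRoot g (.app (n, Mark3.plain) (xs ++ ys)) (.app (n, Mark3.ul) xs)

/-- Remove underlining from a mark. -/
def Mark3.dropUL : Mark3 → Mark3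
  | Mark3.ul => Mark3.plain
  | m => m

/-- `[t]`: the term `t` with all underlining removed. -/
def dropUnderline (t : Term (HSig S) Empty) : Term (HSig S) Empty :=
  t.relabel (fun a : HSig S => (a.1, a.2.dropUL))

/-- A tree labeled over `S'`: no underlined and no marked (starred) symbols. -/
def PlainTerm : Term (HSig S) Empty → Prop :=
  Uses (fun a : HSig S => a.2 = Mark3.plain)

/-- A tree labeled over `S`: plain marks and no occurrence of `⊥`. -/
def SPlainTerm : Term (HSig S) Empty → Prop :=
  Uses (fun a : HSig S => a.2 = Mark3.plain ∧ a.1 ≠ none)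

/-- `R^!`: a maximal `R`-reduction, i.e. `x R* y` with `y` an `R`-normal form. -/
def MaxRed {α : Type*} (R : α → α → Prop) (a b : α) : Prop :=
  Relation.ReflTransGen R a b ∧ ∀ c : α, ¬ R b c

/-- `s⋆`: the term `s` with its root symbol marked. -/
def rootStar : Term (HSig S) Empty → Term (HSig S) Empty
  | Term.var x => Term.var x
  | Term.app a ts => Term.app (a.1, Mark3.star) ts

/-- Root steps of the Star Hydra rule (chop):
`n(α, x⃗) → n̲(β̲₁, …, β̲ₖ, x⃗)` for `k ≥ 0` and `β₁, …, βₖ < α`, where `α`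
labels a leaf. -/
inductive ChopRoot (lt : S → S → Prop) : Term (HSig S) Empty → Term (HSig S) Empty → Prop
  | chop (n α : SBot S) (βs : List (SBot S)) (xs : List (Term (HSig S) Empty)) :
      (∀ β ∈ βs, ltBot lt β α) →
      ChopRoot lt
        (.app (n, Mark3.plain) (Term.app (α, Mark3.plain) [] :: xs))
        (.app (n, Mark3.ul)
          ((βs.map fun β => Term.app (β, Mark3.ul) ([] : List (Term (HSig S) Empty))) ++ xs))

/-- Root steps of the Star Hydra rule (propagate):
`n(m̲(x⃗), y⃗) → n̲(m̲(x⃗), y⃗)`. -/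
inductive PropagateRoot : Term (HSig S) Empty → Term (HSig S) Empty → Prop
  | propagate (n m : SBot S) (xs ys : List (Term (HSig S) Empty)) :
      PropagateRoot
        (.app (n, Mark3.plain) (Term.app (m, Mark3.ul) xs :: ys))
        (.app (n, Mark3.ul) (Term.app (m, Mark3.ul) xs :: ys))

/-- Root steps of the Star Hydra rule (widen):
`n̲(m̲(x⃗), y⃗) → n̲(m̲(x⃗), …, m̲(x⃗), y⃗)` with `0` or more copies. -/
inductive WidenRoot : Term (HSig S) Empty → Term (HSig S) Empty → Prop
  | widen (n m : SBot S) (k : ℕ) (xs ys : List (Term (HSig S) Empty)) :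
      WidenRoot
        (.app (n, Mark3.ul) (Term.app (m, Mark3.ul) xs :: ys))
        (.app (n, Mark3.ul) (List.replicate k (Term.app (m, Mark3.ul) xs) ++ ys))

/-- Root steps of the Star Hydra rule (lengthen):
`n̲(x⃗) → m̲(n̲(x⃗))` provided `m < n`. -/
inductive LengthenRoot (lt : S → S → Prop) : Term (HSig S) Empty → Term (HSig S) Empty → Prop
  | lengthen (n m : SBot S) (xs : List (Term (HSig S) Empty)) :
      ltBot lt m n →
      LengthenRoot lt
        (.app (n, Mark3.ul) xs)
        (.app (m, Mark3.ul) [Term.app (n, Mark3.ul) xs])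

/-- Root steps of the Star Hydra rule (waive): `m̲(x⃗) → m(x⃗)`. -/
inductive WaiveRoot : Term (HSig S) Empty → Term (HSig S) Empty → Prop
  | waive (m : SBot S) (xs : List (Term (HSig S) Empty)) :
      WaiveRoot (.app (m, Mark3.ul) xs) (.app (m, Mark3.plain) xs)

/-- The Star Hydra rewrite relation
`→_SH = →_chop · →_propagate^! · (→_widen ∪ →_lengthen)* · →_waive^!` on trees. -/
def SHRel (lt : S → S → Prop) : Tree (HSig S) Empty → Tree (HSig S) Empty → Prop :=
  fun a b =>
    ∃ c d e : Tree (HSig S) Empty,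
      TreeRel (ChopRoot lt) a c ∧
      MaxRed (TreeRel PropagateRoot) c d ∧
      Relation.ReflTransGen
        (fun x y => TreeRel WidenRoot x y ∨ TreeRel (LengthenRoot lt) x y) d e ∧
      MaxRed (TreeRel WaiveRoot) e b

end StarGames
namespace StarGames

section Infra

variable {σ X : Type}

theorem SwapRoot.symm' {s t : Term σ X} (h : SwapRoot s t) : SwapRoot t s := by
  cases h with
  | swap f us x y ws => exact .swap f us y x ws

theorem SwapStep.symm' {s t : Term σ X} (h : SwapStep s t) : SwapStep t s := by
  induction h with
  | root h => exact .root h.symm'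
  | congr f pre post _ ih => exact .congr f pre post ih

theorem mk_eq_of_equiv {s t : Term σ X} (h : TermEquiv s t) : Tree.mk s = Tree.mk t :=
  Quot.sound h

theorem equiv_of_mk_eq {s t : Term σ X} (h : Tree.mk s = Tree.mk t) : TermEquiv s t :=
  @Quotient.exact _ (treeSetoid σ X) _ _ h

theorem TermEquiv.ctx {s t : Term σ X} (h : TermEquiv s t) (f : σ)
    (pre post : List (Term σ X)) :
    TermEquiv (.app f (pre ++ s :: post)) (.app f (pre ++ t :: post)) := by
  induction h with
  | rel a b h => exact .rel _ _ (.congr f pre post h)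
  | refl a => exact .refl _
  | symm a b _ ih => exact .symm _ _ ih
  | trans a b c _ _ ih1 ih2 => exact .trans _ _ _ ih1 ih2

theorem perm_equiv (f : σ) {l l' : List (Term σ X)} (h : l.Perm l') :
    ∀ pre : List (Term σ X), TermEquiv (.app f (pre ++ l)) (.app f (pre ++ l')) := by
  induction h with
  | nil => intro pre; exact .refl _
  | cons x _ ih =>
      intro pre
      have h2 := ih (pre ++ [x])
      simpa [List.append_assoc] using h2
  | swap x y l =>
      intro pre
      exact .rel _ _ (.root (SwapRoot.swap f pre y x l))
  | trans _ _ ih1 ih2 => intro pre; exact .trans _ _ _ (ih1 pre) (ih2 pre)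

theorem perm_mk (f : σ) {l l' : List (Term σ X)} (h : l.Perm l') :
    Tree.mk (.app f l) = Tree.mk (.app f l') := by
  have := mk_eq_of_equiv (perm_equiv f h [])
  simpa using this

theorem TreeRel.of_rewrite {R : Term σ X → Term σ X → Prop} {s t : Term σ X}
    (h : Rewrite R s t) : TreeRel R (Tree.mk s) (Tree.mk t) := ⟨s, t, rfl, rfl, h⟩

theorem mk_ctx_congr {s t : Term σ X} (h : Tree.mk s = Tree.mk t) (f : σ)
    (pre post : List (Term σ X)) :
    Tree.mk (.app f (pre ++ s :: post)) = Tree.mk (.app f (pre ++ t :: post)) :=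
  mk_eq_of_equiv ((equiv_of_mk_eq h).ctx f pre post)

theorem rtg_ctx {R : Term σ X → Term σ X → Prop} {a b : Tree σ X}
    (h : Relation.ReflTransGen (TreeRel R) a b) :
    ∀ (s t : Term σ X), a = Tree.mk s → b = Tree.mk t → ∀ (f : σ) (pre post : List (Term σ X)),
    Relation.ReflTransGen (TreeRel R) (Tree.mk (.app f (pre ++ s :: post)))
      (Tree.mk (.app f (pre ++ t :: post))) := by
  induction h with
  | refl =>
      intro s t hs ht f pre post
      have : Tree.mk s = Tree.mk t := by rw [← hs, ht]
      rw [mk_ctx_congr this f pre post]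
  | tail h step ih =>
      intro s t hs ht f pre post
      rcases step with ⟨p, q, hc, hb, hr⟩
      have h1 := ih s p hs hc f pre post
      have h2 : TreeRel R (Tree.mk (.app f (pre ++ p :: post))) (Tree.mk (.app f (pre ++ q :: post))) :=
        TreeRel.of_rewrite (.congr f pre post hr)
      have h3 : Tree.mk (Term.app f (pre ++ q :: post)) = Tree.mk (.app f (pre ++ t :: post)) :=
        mk_ctx_congr (by rw [← hb, ht]) f pre post
      exact h1.tail (h3 ▸ h2)

theorem rtg_ctx' {R : Term σ X → Term σ X → Prop} {s t : Term σ X}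
    (h : Relation.ReflTransGen (TreeRel R) (Tree.mk s) (Tree.mk t))
    (f : σ) (pre post : List (Term σ X)) :
    Relation.ReflTransGen (TreeRel R) (Tree.mk (.app f (pre ++ s :: post)))
      (Tree.mk (.app f (pre ++ t :: post))) :=
  rtg_ctx h s t rfl rfl f pre post

theorem rtg_children {R : Term σ X → Term σ X → Prop} {l l' : List (Term σ X)}
    (h : List.Forall₂ (fun s t => Relation.ReflTransGen (TreeRel R) (Tree.mk s) (Tree.mk t)) l l') :
    ∀ (f : σ) (pre post : List (Term σ X)),
    Relation.ReflTransGen (TreeRel R) (Tree.mk (.app f (pre ++ l ++ post)))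
      (Tree.mk (.app f (pre ++ l' ++ post))) := by
  induction h with
  | nil => intro f pre post; exact .refl
  | @cons a b l l' hab h ih =>
      intro f pre post
      have s1 := rtg_ctx' hab f pre (l ++ post)
      have s2 := ih f (pre ++ [b]) post
      simp only [List.append_assoc, List.cons_append, List.singleton_append,
        List.nil_append] at s1 s2 ⊢
      exact s1.trans s2

theorem forall₂_of_zip {α β : Type*} {R : α → β → Prop} {l₁ : List α} {l₂ : List β}
    (hl : l₁.length = l₂.length) (h : ∀ p ∈ l₁.zip l₂, R p.1 p.2) :
    List.Forall₂ R l₁ l₂ :=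
  List.forall₂_iff_zip.mpr ⟨hl, fun hm => h _ hm⟩

theorem forall₂_append_right_split {α β : Type*} {R : α → β → Prop} :
    ∀ {l₁ : List β} {l : List α} {l₂ : List β}, List.Forall₂ R l (l₁ ++ l₂) →
    ∃ m₁ m₂, l = m₁ ++ m₂ ∧ List.Forall₂ R m₁ l₁ ∧ List.Forall₂ R m₂ l₂ := by
  intro l₁
  induction l₁ with
  | nil => intro l l₂ h; exact ⟨[], l, rfl, .nil, h⟩
  | cons b l₁ ih =>
      intro l l₂ h
      rw [List.cons_append] at h
      rcases List.forall₂_cons_right_iff.mp h with ⟨a, l', hab, h', rfl⟩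
      rcases ih h' with ⟨m₁, m₂, rfl, h₁, h₂⟩
      exact ⟨a :: m₁, m₂, rfl, .cons hab h₁, h₂⟩

theorem forall₂_middle_split {α β : Type*} {R : α → β → Prop} {l : List α}
    {pre post : List β} {b : β}
    (h : List.Forall₂ R l (pre ++ b :: post)) :
    ∃ m₁ a m₂, l = m₁ ++ a :: m₂ ∧ List.Forall₂ R m₁ pre ∧ R a b ∧ List.Forall₂ R m₂ post := by
  rcases forall₂_append_right_split h with ⟨m₁, m₂, rfl, h₁, h₂⟩
  rcases List.forall₂_cons_right_iff.mp h₂ with ⟨a, l', hab, h', rfl⟩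
  exact ⟨m₁, a, l', rfl, h₁, hab, h'⟩

theorem forall₂_perm_right {α β : Type*} {R : α → β → Prop} {l₁ l₂ : List β}
    (p : l₁.Perm l₂) :
    ∀ {l : List α}, List.Forall₂ R l l₁ → ∃ l', l.Perm l' ∧ List.Forall₂ R l' l₂ := by
  induction p with
  | nil => intro l h; cases h; exact ⟨[], .refl _, .nil⟩
  | @cons x l₁ l₂ p ih =>
      intro l h
      rcases List.forall₂_cons_right_iff.mp h with ⟨a, l', hab, h', rfl⟩
      rcases ih h' with ⟨l'', hperm, hF⟩
      exact ⟨a :: l'', hperm.cons a, .cons hab hF⟩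
  | swap x y l₀ =>
      intro l h
      rcases List.forall₂_cons_right_iff.mp h with ⟨a, l', hab, h', rfl⟩
      rcases List.forall₂_cons_right_iff.mp h' with ⟨a', l'', hab', h'', rfl⟩
      exact ⟨a' :: a :: l'', List.Perm.swap a' a l'', .cons hab' (.cons hab h'')⟩
  | trans p q ih1 ih2 =>
      intro l h
      rcases ih1 h with ⟨l', hp1, hF1⟩
      rcases ih2 hF1 with ⟨l'', hp2, hF2⟩
      exact ⟨l'', hp1.trans hp2, hF2⟩

theorem forall₂_mem_left {α β : Type*} {R : α → β → Prop} {l₁ : List α} {l₂ : List β}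
    (h : List.Forall₂ R l₁ l₂) {a : α} (ha : a ∈ l₁) : ∃ b ∈ l₂, R a b := by
  induction h with
  | nil => cases ha
  | @cons x y l l' hxy h ih =>
      rcases List.mem_cons.mp ha with rfl | ha
      · exact ⟨y, List.mem_cons_self, hxy⟩
      · rcases ih ha with ⟨b, hb, hr⟩
        exact ⟨b, List.mem_cons_of_mem _ hb, hr⟩

theorem forall₂_same {α : Type*} {R : α → α → Prop} {l : List α}
    (h : ∀ a ∈ l, R a a) : List.Forall₂ R l l := by
  induction l with
  | nil => exact .nil
  | cons a l ih =>
      exact .cons (h a List.mem_cons_self) (ih fun a ha => h a (List.mem_cons_of_mem _ ha))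

theorem forall₂_replicate {α β : Type*} {R : α → β → Prop} {a : α} {b : β}
    (h : R a b) (k : ℕ) : List.Forall₂ R (List.replicate k a) (List.replicate k b) := by
  induction k with
  | zero => exact .nil
  | succ k ih => exact .cons h ih

end Infra

end StarGames
namespace StarGames
theorem forall₂_append' {α β : Type*} {R : α → β → Prop} {l₁ l₂ : List α} {m₁ m₂ : List β}
    (h₁ : List.Forall₂ R l₁ m₁) (h₂ : List.Forall₂ R l₂ m₂) :
    List.Forall₂ R (l₁ ++ l₂) (m₁ ++ m₂) := List.rel_append h₁ h₂
end StarGames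
namespace StarGames

variable {S : Type}

theorem ltBot_none {lt : S → S → Prop} {m n : SBot S} (h : ltBot lt m n) :
    ltBot lt none n := by
  cases n with
  | none => cases m <;> exact absurd h (by simp [ltBot])
  | some n₀ => trivial

/-- The simulation invariant: `Inv γ v t` iff `t` is obtained from the plain
term `v` by garbage-collecting, at each underlined node, at least `γ`
(plain) children, up to permutation of arguments. -/
inductive Inv (γ : ℕ) : Term (HSig S) Empty → Term (HSig S) Empty → Prop
  | plain (n : SBot S) (vs vs' ts : List (Term (HSig S) Empty)) :
      vs.Perm vs' → vs'.length = ts.length →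
      (∀ p ∈ vs'.zip ts, Inv γ p.1 p.2) →
      Inv γ (.app (n, Mark3.plain) vs) (.app (n, Mark3.plain) ts)
  | ul (n : SBot S) (vs vs' ws ts : List (Term (HSig S) Empty)) :
      vs.Perm (vs' ++ ws) → vs'.length = ts.length →
      (∀ p ∈ vs'.zip ts, Inv γ p.1 p.2) →
      γ ≤ ws.length → (∀ w ∈ ws, PlainTerm w) →
      Inv γ (.app (n, Mark3.plain) vs) (.app (n, Mark3.ul) ts)

theorem Inv.plain' {γ : ℕ} (n : SBot S) {vs vs' ts : List (Term (HSig S) Empty)}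
    (hp : vs.Perm vs') (h : List.Forall₂ (Inv γ) vs' ts) :
    Inv γ (.app (n, Mark3.plain) vs) (.app (n, Mark3.plain) ts) :=
  .plain n vs vs' ts hp h.length_eq
    (fun p hp2 => (List.forall₂_iff_zip.mp h).2 hp2)

theorem Inv.ul' {γ : ℕ} (n : SBot S) {vs vs' ws ts : List (Term (HSig S) Empty)}
    (hp : vs.Perm (vs' ++ ws)) (h : List.Forall₂ (Inv γ) vs' ts)
    (hγ : γ ≤ ws.length) (hws : ∀ w ∈ ws, PlainTerm w) :
    Inv γ (.app (n, Mark3.plain) vs) (.app (n, Mark3.ul) ts) :=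
  .ul n vs vs' ws ts hp h.length_eq
    (fun p hp2 => (List.forall₂_iff_zip.mp h).2 hp2) hγ hws

theorem Inv.plainTerm {γ : ℕ} {v t : Term (HSig S) Empty} (h : Inv γ v t) :
    PlainTerm v := by
  induction h with
  | plain n vs vs' ts hp hl hz ih =>
      refine Uses.app _ _ rfl ?_
      intro x hx
      have hx' : x ∈ vs' := hp.subset hx
      have hF : List.Forall₂ (fun a _ => PlainTerm a) vs' ts := forall₂_of_zip hl ih
      rcases forall₂_mem_left hF hx' with ⟨b, _, hb⟩
      exact hb
  | ul n vs vs' ws ts hp hl hz hγ hws ih =>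
      refine Uses.app _ _ rfl ?_
      intro x hx
      rcases List.mem_append.mp (hp.subset hx) with hx' | hx'
      · have hF : List.Forall₂ (fun a _ => PlainTerm a) vs' ts := forall₂_of_zip hl ih
        rcases forall₂_mem_left hF hx' with ⟨b, _, hb⟩
        exact hb
      · exact hws x hx'

theorem Inv.mono {γ γ' : ℕ} (hγ : γ' ≤ γ) {v t : Term (HSig S) Empty}
    (h : Inv γ v t) : Inv γ' v t := by
  induction h with
  | plain n vs vs' ts hp hl hz ih => exact .plain n vs vs' ts hp hl ih
  | ul n vs vs' ws ts hp hl hz hw hpl ih =>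
      exact .ul n vs vs' ws ts hp hl ih (le_trans hγ hw) hpl

theorem Inv.refl {γ : ℕ} {v : Term (HSig S) Empty} (h : PlainTerm v) : Inv γ v v := by
  induction h with
  | var x => exact x.elim
  | app f ts hf hts ih =>
      obtain ⟨n, m⟩ := f
      simp only at hf
      subst hf
      exact Inv.plain' n (List.Perm.refl _) (forall₂_same ih)

theorem Inv.child_mono {γ : ℕ} {s t : Term (HSig S) Empty}
    (hst : ∀ v, Inv γ v s → Inv γ v t) (f : HSig S) (pre post : List (Term (HSig S) Empty)) :
    ∀ v, Inv γ v (.app f (pre ++ s :: post)) → Inv γ v (.app f (pre ++ t :: post)) := by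
  intro v hv
  cases hv with
  | plain n vs vs' ts hp hl hz =>
      have hF := forall₂_of_zip hl hz
      rcases forall₂_middle_split hF with ⟨m₁, a, m₂, rfl, h₁, ha, h₂⟩
      exact Inv.plain' n hp (forall₂_append' h₁ (List.Forall₂.cons (hst a ha) h₂))
  | ul n vs vs' ws ts hp hl hz hγ hws =>
      have hF := forall₂_of_zip hl hz
      rcases forall₂_middle_split hF with ⟨m₁, a, m₂, rfl, h₁, ha, h₂⟩
      exact Inv.ul' n hp (forall₂_append' h₁ (List.Forall₂.cons (hst a ha) h₂)) hγ hws

theorem Inv.swapStep {γ : ℕ} {t t' : Term (HSig S) Empty} (h : SwapStep t t') :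
    ∀ v, Inv γ v t → Inv γ v t' := by
  induction h with
  | root hr =>
      cases hr with
      | swap f us x y ws =>
          intro v hv
          have hperm : (us ++ x :: y :: ws).Perm (us ++ y :: x :: ws) :=
            List.Perm.append_left us (List.Perm.swap y x ws)
          cases hv with
          | plain n vs vs' ts hp hl hz =>
              have hF := forall₂_of_zip hl hz
              rcases forall₂_perm_right hperm hF with ⟨l', hp2, hF'⟩
              exact Inv.plain' n (hp.trans hp2) hF'
          | ul n vs vs' ws₀ ts hp hl hz hγ hws =>
              have hF := forall₂_of_zip hl hz
              rcases forall₂_perm_right hperm hF with ⟨l', hp2, hF'⟩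
              exact Inv.ul' n (hp.trans (hp2.append_right ws₀)) hF' hγ hws
  | congr f pre post h ih => exact Inv.child_mono ih f pre post

theorem Inv.equiv {γ : ℕ} {t t' : Term (HSig S) Empty} (h : TermEquiv t t') :
    ∀ v, (Inv γ v t → Inv γ v t') ∧ (Inv γ v t' → Inv γ v t) := by
  induction h with
  | rel a b hr => exact fun v => ⟨Inv.swapStep hr v, Inv.swapStep hr.symm' v⟩
  | refl a => exact fun v => ⟨id, id⟩
  | symm a b h ih => exact fun v => ⟨(ih v).2, (ih v).1⟩
  | trans a b c _ _ ih1 ih2 =>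
      exact fun v => ⟨fun h => (ih2 v).1 ((ih1 v).1 h), fun h => (ih1 v).2 ((ih2 v).2 h)⟩

theorem Inv.gc {γ : ℕ} {t t' : Term (HSig S) Empty} (h : Rewrite (GRoot γ) t t') :
    ∀ v, Inv γ v t → Inv γ v t' := by
  induction h with
  | root hr =>
      cases hr with
      | gc n xs ys hy =>
          intro v hv
          cases hv with
          | plain n₀ vs vs' ts hp hl hz =>
              have hF := forall₂_of_zip hl hz
              rcases forall₂_append_right_split hF with ⟨m₁, m₂, rfl, h₁, h₂⟩
              refine Inv.ul' n hp h₁ ?_ ?_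
              · rw [h₂.length_eq]; exact hy
              · intro w hw
                rcases forall₂_mem_left h₂ hw with ⟨b, _, hb⟩
                exact hb.plainTerm
  | congr f pre post h ih => exact Inv.child_mono ih f pre post

theorem Inv.gc_rtg {γ : ℕ} {v t : Term (HSig S) Empty} (h : Inv γ v t) :
    Relation.ReflTransGen (TreeRel (GRoot γ)) (Tree.mk v) (Tree.mk t) := by
  induction h with
  | plain n vs vs' ts hp hl hz ih =>
      rw [perm_mk (n, Mark3.plain) hp]
      have h1 := rtg_children (forall₂_of_zip hl ih) (n, Mark3.plain) [] []
      simpa using h1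
  | ul n vs vs' ws ts hp hl hz hγ hws ih =>
      rw [perm_mk (n, Mark3.plain) hp]
      have h1 := rtg_children (forall₂_of_zip hl ih) (n, Mark3.plain) [] ws
      have h2 : TreeRel (GRoot γ) (Tree.mk (.app (n, Mark3.plain) (ts ++ ws)))
          (Tree.mk (.app (n, Mark3.ul) ts)) :=
        TreeRel.of_rewrite (.root (GRoot.gc n ts ws hγ))
      exact (by simpa using h1 : Relation.ReflTransGen _ _ _).tail h2

end StarGames
namespace StarGames

variable {S : Type}

theorem Inv.lengthen {lt : S → S → Prop} {γ : ℕ} {t u : Term (HSig S) Empty}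
    (h : Rewrite (LengthenRoot lt) t u) :
    ∀ v, Inv (γ+1) v t → ∃ v',
      Relation.ReflTransGen (TreeRel (StarHRoot lt)) (Tree.mk v) (Tree.mk v') ∧ Inv γ v' u := by
  induction h with
  | congr f pre post h ih =>
      intro v hv
      cases hv with
      | plain n vs vs' ts hp hl hz =>
          have hF := forall₂_of_zip hl hz
          rcases forall₂_middle_split hF with ⟨m₁, a, m₂, rfl, h₁, ha, h₂⟩
          rcases ih a ha with ⟨a', hsteps, ha'⟩
          refine ⟨.app (n, Mark3.plain) (m₁ ++ a' :: m₂), ?_, ?_⟩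
          · rw [perm_mk (n, Mark3.plain) hp]
            exact rtg_ctx' hsteps (n, Mark3.plain) m₁ m₂
          · exact Inv.plain' n (List.Perm.refl _)
              (forall₂_append' (h₁.imp (fun a b => Inv.mono (Nat.le_succ γ)))
                (List.Forall₂.cons ha' (h₂.imp (fun a b => Inv.mono (Nat.le_succ γ)))))
      | ul n vs vs' ws ts hp hl hz hγ hws =>
          have hF := forall₂_of_zip hl hz
          rcases forall₂_middle_split hF with ⟨m₁, a, m₂, rfl, h₁, ha, h₂⟩
          rcases ih a ha with ⟨a', hsteps, ha'⟩
          refine ⟨.app (n, Mark3.plain) ((m₁ ++ a' :: m₂) ++ ws), ?_, ?_⟩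
          · rw [perm_mk (n, Mark3.plain) hp]
            have h3 := rtg_ctx' hsteps (n, Mark3.plain) m₁ (m₂ ++ ws)
            simpa [List.append_assoc] using h3
          · exact Inv.ul' n (List.Perm.refl _)
              (forall₂_append' (h₁.imp (fun a b => Inv.mono (Nat.le_succ γ)))
                (List.Forall₂.cons ha' (h₂.imp (fun a b => Inv.mono (Nat.le_succ γ)))))
              (le_trans (Nat.le_succ γ) hγ) hws
  | root hr =>
      cases hr with
      | lengthen n m xs hlt =>
          intro v hv
          cases hv with
          | ul n₀ vs vs' ws ts hp hl hz hγ hws =>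
            obtain ⟨w₀, ws', rfl⟩ : ∃ w₀ ws', ws = w₀ :: ws' := by
              cases ws with
              | nil => simp at hγ
              | cons a b => exact ⟨a, b, rfl⟩
            obtain ⟨q, qs, hw₀⟩ : ∃ q qs, w₀ = Term.app (q, Mark3.plain) qs := by
              have hpl := hws w₀ List.mem_cons_self
              cases hpl with
              | var x => exact x.elim
              | app f₀ ts₀ hf hts =>
                  obtain ⟨q, mq⟩ := f₀
                  simp only at hf
                  subst hf
                  exact ⟨q, ts₀, rfl⟩
            subst hw₀
            set L := vs' ++ Term.app (q, Mark3.plain) qs :: ws' with hL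
            set Xs := Term.app (n, Mark3.star) L with hX
            set bot : Term (HSig S) Empty := Term.app ((none : SBot S), Mark3.plain) [] with hbot
            set N : Term (HSig S) Empty := Term.app (n, Mark3.plain) (vs' ++ ws') with hN
            refine ⟨Term.app (m, Mark3.plain) (N :: List.replicate γ bot), ?_, ?_⟩
            · rw [perm_mk (n, Mark3.plain) hp]
              have s1 : TreeRel (StarHRoot lt) (Tree.mk (.app (n, Mark3.plain) L)) (Tree.mk Xs) :=
                TreeRel.of_rewrite (.root (StarHRoot.put n L))
              have s2 : TreeRel (StarHRoot lt) (Tree.mk Xs)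
                  (Tree.mk (.app (m, Mark3.plain) (List.replicate (γ+1) Xs))) :=
                TreeRel.of_rewrite (.root (StarHRoot.copy n m (γ+1) L hlt))
              have sbot : Relation.ReflTransGen (TreeRel (StarHRoot lt)) (Tree.mk Xs) (Tree.mk bot) :=
                Relation.ReflTransGen.single
                  (TreeRel.of_rewrite (.root (StarHRoot.copy n none 0 L (ltBot_none hlt))))
              have s3 : Relation.ReflTransGen (TreeRel (StarHRoot lt))
                  (Tree.mk (.app (m, Mark3.plain) (List.replicate (γ+1) Xs)))
                  (Tree.mk (.app (m, Mark3.plain) (Xs :: List.replicate γ bot))) := by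
                have h3 := rtg_children (forall₂_replicate (R := fun s t => Relation.ReflTransGen (TreeRel (StarHRoot lt)) (Tree.mk s) (Tree.mk t)) sbot γ) (m, Mark3.plain) [Xs] []
                simpa [List.replicate_succ] using h3
              have s4 : TreeRel (StarHRoot lt)
                  (Tree.mk (.app (m, Mark3.plain) (Xs :: List.replicate γ bot)))
                  (Tree.mk (.app (m, Mark3.plain) (N :: List.replicate γ bot))) := by
                have hdown : Rewrite (StarHRoot lt) Xs N := by
                  have hstep := StarHRoot.down (lt := lt) n q 0 vs' qs ws'
                  have h2 : (vs' ++ List.replicate 0 (Term.app ((q : SBot S), Mark3.star) qs) ++ ws')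
                      = vs' ++ ws' := by simp
                  rw [hX, hL, hN, ← h2]
                  exact .root hstep
                have h4 := TreeRel.of_rewrite
                  (Rewrite.congr (m, Mark3.plain) [] (List.replicate γ bot) hdown)
                simpa using h4
              exact ((Relation.ReflTransGen.single s1).tail s2).trans (s3.tail s4)
            · refine Inv.ul' (vs' := [N]) (ws := List.replicate γ bot) m (List.Perm.refl _) ?_ ?_ ?_
              · refine List.Forall₂.cons ?_ List.Forall₂.nil
                refine Inv.ul' (vs' := vs') (ws := ws') n (List.Perm.refl _)
                  ((forall₂_of_zip hl hz).imp (fun a b => Inv.mono (Nat.le_succ γ))) ?_ ?_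
                · have h5 : γ + 1 ≤ ws'.length + 1 := by simpa using hγ
                  omega
                · intro w hw; exact hws w (List.mem_cons_of_mem _ hw)
              · simp
              · intro w hw
                have hwb : w = bot := List.eq_of_mem_replicate hw
                subst hwb
                exact Uses.app _ _ rfl (by simp)

theorem reach_inv {g : ℕ} {s : Term (HSig S) Empty} (hs : PlainTerm s) :
    ∀ c : Tree (HSig S) Empty,
      Relation.ReflTransGen (TreeRel (GRoot (g+1))) (Tree.mk s) c →
      ∃ t, c = Tree.mk t ∧ Inv (g+1) s t := by
  intro c h
  induction h with
  | refl => exact ⟨s, rfl, Inv.refl hs⟩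
  | tail h step ih =>
      rcases ih with ⟨t, rfl, hinv⟩
      rcases step with ⟨a, b, ha, hb, hr⟩
      have he : TermEquiv t a := equiv_of_mk_eq ha
      exact ⟨b, hb, Inv.gc hr s ((Inv.equiv he s).1 hinv)⟩

end StarGames

namespace StarGames

/-- Let `(S, <)` be a well-founded partial order, `S' = S ∪ {⊥}` with `⊥` a fresh
least element, and `g ≥ 1`.  If `s` is a tree labeled over `S'` (no underlined,
no marked symbols) and `s ↪_{g+1}* · →_lengthen u`, then there exists a tree `v`
labeled over `S'` with `s ▷* v ↪_g* u`, where `▷` is the `Star` relation over `S'`. -/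
theorem lengthen_by_star
    {S : Type} (lt : S → S → Prop) (hirr : Irreflexive lt) (htrans : Transitive lt)
    (hwf : WellFounded lt) (g : ℕ) (hg : 1 ≤ g)
    (s : Term (HSig S) Empty) (hs : PlainTerm s) (u : Tree (HSig S) Empty)
    (h : ∃ c : Tree (HSig S) Empty,
          Relation.ReflTransGen (TreeRel (GRoot (g + 1))) (Tree.mk s) c ∧
          TreeRel (LengthenRoot lt) c u) :
    ∃ v : Term (HSig S) Empty, PlainTerm v ∧
      Relation.ReflTransGen (TreeRel (StarHRoot lt)) (Tree.mk s) (Tree.mk v) ∧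
      Relation.ReflTransGen (TreeRel (GRoot g)) (Tree.mk v) u := by
  obtain ⟨c, hrtg, hlen⟩ := h
  obtain ⟨t, rfl, hinv⟩ := reach_inv hs c hrtg
  rcases hlen with ⟨a, b, ha, hb, hr⟩
  have hinv' : Inv (g + 1) s a := (Inv.equiv (equiv_of_mk_eq ha) s).1 hinv
  obtain ⟨v, hsteps, hinvu⟩ := Inv.lengthen hr s hinv'
  exact ⟨v, hinvu.plainTerm, hsteps, by rw [hb]; exact hinvu.gc_rtg⟩

end StarGames
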